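/- Let C_n be a cycle (n ≥ 3) with two specified adjacent vertices p1, p2 precolored properly with colors from {1,2,3}. Then this precoloring extends to a proper coloring of C_n with colors {1,2,3} such that exactly one vertex of the cycle attains the maximum color appearing on the cycle. -/

import Mathlib

/-- An abstract plane graph: a graph together with its set of faces,
each face recorded by the set of vertices incident with it, and a
distinguished outer (unbounded) face. -/
structure PlaneGraph (V : Type) where
  graph : SimpleGraph V
  Faces : Set (Set V)
  outer : Set V
  outer_mem : outer ∈ Faces

/-- Degree of a vertex in a plane graph. -/
noncomputable def PlaneGraph.degree {V : Type} (P : PlaneGraph V) (v : V) : ℕ :=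
  (P.graph.neighborSet v).ncard

/-- A coloring has a unique maximum on a face `f`. -/
def UniqueMaxOn {V : Type} (c : V → ℕ) (f : Set V) : Prop :=
  ∃! v, v ∈ f ∧ ∀ u ∈ f, c u ≤ c v

/-- Facial unique-maximum coloring: proper, positive colors, and each face
has exactly one incident vertex attaining the maximum color on it. -/
def PlaneGraph.IsFUM {V : Type} (P : PlaneGraph V) (c : V → ℕ) : Prop :=
  (∀ v, 1 ≤ c v) ∧ (∀ u v, P.graph.Adj u v → c u ≠ c v) ∧
    ∀ f ∈ P.Faces, UniqueMaxOn c f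

/-- `χ_fum(G) ≤ k`. -/
def PlaneGraph.fumLE {V : Type} (P : PlaneGraph V) (k : ℕ) : Prop :=
  ∃ c : V → ℕ, P.IsFUM c ∧ ∀ v, c v ≤ k

/-- A star forest: an acyclic graph in which every edge has an endpoint of
degree at most one (equivalently, a disjoint union of stars). -/
def SimpleGraph.IsStarForest {V : Type} (G : SimpleGraph V) : Prop :=
  G.IsAcyclic ∧ ∀ u v, G.Adj u v →
    (G.neighborSet u).Subsingleton ∨ (G.neighborSet v).Subsingleton

/-- The cycle graph `C_n` on `ZMod n`. -/
def cycleGraph (n : ℕ) : SimpleGraph (ZMod n) where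
  Adj i j := i ≠ j ∧ (i - j = 1 ∨ j - i = 1)
  symm := by
    constructor
    intro i j h
    exact ⟨h.1.symm, h.2.symm⟩
  loopless := by
    constructor
    intro i h
    exact h.1 rfl

/-- `G` is (spanned by) a cycle. -/
def SimpleGraph.IsCycleGraph {V : Type} (G : SimpleGraph V) : Prop :=
  ∃ (x : V) (w : G.Walk x x), w.IsCycle ∧ (∀ v, v ∈ w.support) ∧
    ∀ e ∈ G.edgeSet, e ∈ w.edges

/-!
Read the cycle as the path `p₁, p₂, …` and colour it by alternating two colours from `{1, 2}`,
with a single vertex of colour `3` placed at an end of that path: at `p₁` itself if `p₁` is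
precoloured `3`, and at the last vertex (the other neighbour of `p₁`) otherwise. Because the
peak sits at an end, the closing edge of the cycle always meets it, so the parity of `n` does not
matter. When `p₂` is precoloured `3`, exchange the roles of `p₁` and `p₂`.
-/

namespace SimpleGraph

variable {V W α : Type*} [LE α]

def IsUniqueMaxColoring (G : SimpleGraph V) (c : V → α) : Prop :=
  (∀ u v, G.Adj u v → c u ≠ c v) ∧ ∃! v, ∀ u, c u ≤ c v

theorem IsUniqueMaxColoring.comp_iso {G : SimpleGraph V} {H : SimpleGraph W} {c : V → α}
    (hc : G.IsUniqueMaxColoring c) (f : H ≃g G) : H.IsUniqueMaxColoring (c ∘ f) :=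
  ⟨fun _ _ h => hc.1 _ _ (f.map_adj_iff.2 h),
    (f.toEquiv.existsUnique_congr fun _ =>
      f.toEquiv.forall_congr_right (q := fun u => c u ≤ _)).2 hc.2⟩

end SimpleGraph

namespace cycleGraph

variable {n : ℕ} [Fact (1 < n)]

theorem val_eq_succ_or_wrap {a b : ZMod n} (h : a - b = 1) :
    a.val = b.val + 1 ∨ (a.val = 0 ∧ b.val = n - 1) := by
  have hb := ZMod.val_lt b
  rw [sub_eq_iff_eq_add'.1 h, ZMod.val_add, ZMod.val_one]
  rcases Nat.lt_or_ge (b.val + 1) n with hlt | hge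
  · exact .inl (Nat.mod_eq_of_lt hlt)
  · right
    rw [show b.val + 1 = n by omega, Nat.mod_self]
    omega

theorem val_of_adj {u v : ZMod n} (h : (cycleGraph n).Adj u v) :
    u.val = v.val + 1 ∨ v.val = u.val + 1 ∨
      (u.val = 0 ∧ v.val = n - 1) ∨ (v.val = 0 ∧ u.val = n - 1) := by
  rcases h.2 with h | h
  · rcases val_eq_succ_or_wrap h with h | h <;> tauto
  · rcases val_eq_succ_or_wrap h with h | h <;> tauto

def affineIso (p d : ZMod n) (hd : d = 1 ∨ d = -1) : cycleGraph n ≃g cycleGraph n where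
  toFun v := (v - p) * d
  invFun w := w * d + p
  left_inv v := by rcases hd with rfl | rfl <;> ring
  right_inv w := by rcases hd with rfl | rfl <;> ring
  map_rel_iff' {u v} := by
    rcases hd with rfl | rfl <;> simp [cycleGraph, or_comm]

def peakColoring (n s m a b : ℕ) (v : ZMod n) : ℕ :=
  if v.val = s then m else if v.val % 2 = 0 then a else b

theorem peakColoring_isUniqueMaxColoring {s m a b : ℕ} (hs : s = 0 ∨ s = n - 1) (hab : a ≠ b)
    (ha : a < m) (hb : b < m) : (cycleGraph n).IsUniqueMaxColoring (peakColoring n s m a b) := by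
  have hn : 1 < n := Fact.out
  have hs' : (s : ZMod n).val = s := ZMod.val_cast_of_lt (by omega)
  refine ⟨fun u v huv => ?_, s, fun u => ?_, fun v hv => ?_⟩
  · rcases val_of_adj huv with h | h | h | h <;>
      simp only [peakColoring] <;> split_ifs <;> omega
  · simp only [peakColoring, hs', if_true]
    split_ifs <;> omega
  · have hm := hv s
    simp only [peakColoring, hs', if_true] at hm
    have hvs : v.val = s := by split_ifs at hm with h <;> omega
    rw [← ZMod.natCast_zmod_val v, hvs]

theorem exists_peakColoring (hn : 3 ≤ n) {x y : ℕ} (hx : x = 1 ∨ x = 2 ∨ x = 3)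
    (hy : y = 1 ∨ y = 2) (hxy : x ≠ y) :
    ∃ c : ZMod n → ℕ, c 0 = x ∧ c 1 = y ∧ (∀ v, c v ∈ ({1, 2, 3} : Set ℕ)) ∧
      (cycleGraph n).IsUniqueMaxColoring c := by
  have hmem : ∀ {s a b : ℕ}, (a = 1 ∨ a = 2) → (b = 1 ∨ b = 2) →
      ∀ v, peakColoring n s 3 a b v ∈ ({1, 2, 3} : Set ℕ) := by
    intro s a b ha hb v
    simp only [peakColoring, Set.mem_insert_iff, Set.mem_singleton_iff]
    split_ifs <;> omega
  by_cases hx3 : x = 3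
  · refine ⟨peakColoring n 0 3 (3 - y) y, ?_, ?_, hmem (by omega) (by omega),
      peakColoring_isUniqueMaxColoring (.inl rfl) (by omega) (by omega) (by omega)⟩
    · simp [peakColoring, hx3]
    · simp [peakColoring, ZMod.val_one]
  · refine ⟨peakColoring n (n - 1) 3 x y, ?_, ?_, hmem (by omega) (by omega),
      peakColoring_isUniqueMaxColoring (.inr rfl) hxy (by omega) (by omega)⟩
    · simp [peakColoring, show 0 ≠ n - 1 by omega]
    · simp [peakColoring, ZMod.val_one, show 1 ≠ n - 1 by omega]

end cycleGraph

/-- A proper precoloring of two adjacent vertices of a cycle `C_n` (n ≥ 3)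
with colors from {1,2,3} extends to a proper coloring of the whole cycle with
colors {1,2,3} having a unique vertex of maximum color. -/
theorem stmt2 (n : ℕ) (hn : 3 ≤ n) (p₁ p₂ : ZMod n)
    (hadj : (cycleGraph n).Adj p₁ p₂)
    (x y : ℕ) (hx : x ∈ ({1, 2, 3} : Set ℕ)) (hy : y ∈ ({1, 2, 3} : Set ℕ))
    (hxy : x ≠ y) :
    ∃ c : ZMod n → ℕ, c p₁ = x ∧ c p₂ = y ∧
      (∀ v, c v ∈ ({1, 2, 3} : Set ℕ)) ∧
      (∀ u v, (cycleGraph n).Adj u v → c u ≠ c v) ∧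
      (∃! v : ZMod n, ∀ u : ZMod n, c u ≤ c v) := by
  simp only [Set.mem_insert_iff, Set.mem_singleton_iff] at hx hy
  have : Fact (1 < n) := ⟨by omega⟩
  wlog hy3 : y ≠ 3 generalizing p₁ p₂ x y
  · obtain ⟨c, hc₂, hc₁, hc⟩ := this p₂ p₁ hadj.symm y x hxy.symm hy hx (by omega)
    exact ⟨c, hc₁, hc₂, hc⟩
  obtain ⟨c, hc₀, hc₁, hmem, hc⟩ := cycleGraph.exists_peakColoring hn hx (by omega) hxy
  have hd : p₂ - p₁ = 1 ∨ p₂ - p₁ = -1 := by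
    rcases hadj.2 with h | h
    · exact .inr (by rw [← h, neg_sub])
    · exact .inl h
  let f := cycleGraph.affineIso p₁ (p₂ - p₁) hd
  refine ⟨c ∘ f, ?_, ?_, fun v => hmem (f v), hc.comp_iso f⟩
  · simpa [f, cycleGraph.affineIso] using hc₀
  · have hf : f p₂ = 1 := by
      change (p₂ - p₁) * (p₂ - p₁) = 1
      rcases hd with h | h <;> simp [h]
    simpa [hf] using hc₁
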